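/- For any two distributions F and G and any p ∈ ℕ: Shift_±^{WD_p}(F,G) > 0 if and only if Shift_±^{AVM}(F,G) > 0, and Shift_±^{AVM}(F,G) > 0 implies Shift_±^{CD}(F,G) > 0. The converse of the last implication fails in general. -/

import Mathlib

/-!
Since `z ↦ z^{[p]}` preserves sign, the `WD_p` integrand, for every `p`, is positive exactly on the
set `S` of levels `α` at which `F⁻¹ - G⁻¹` is positive both at `(1 + α) / 2` and at `(1 - α) / 2`;
so every `WD_p` shift is positive iff `S` is not null. The points of a set of reals that are
isolated from the right form a countable set, so a non-null `S` has a point `x` that `S` approaches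
from the right. Pick `y ∈ S` slightly above `x`: on the rectangle `x < β < y < α` with `α` close to
`x`, monotonicity and `y ∈ S` bound the upper term of the Cramér integrand from below, while
monotonicity, left continuity of `F⁻¹` at `(1 - x) / 2` and `x ∈ S` bound the lower one.

For the converse, take `F` uniform on `(0, 1)` and `G⁻¹ = min · (1 / 2)`: their lower quantiles
agree, so `S = ∅`, but the Cramér integrand compares different levels `β > α` and is positive.
-/

open MeasureTheory
open scoped ENNReal

/-- Signed `p`-th power `z^{[p]} = sgn(z)·|z|^p`. -/
noncomputable def sgnPow (p : ℕ) (z : ℝ) : ℝ := Real.sign z * |z| ^ p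

/-- `Shift₊^{WD_p}` component, as a lower Lebesgue integral. -/
noncomputable def wdShiftPlusL (p : ℕ) (qF qG : ℝ → ℝ) : ℝ≥0∞ :=
  ∫⁻ α in Set.Ioo (0:ℝ) 1,
    ENNReal.ofReal (max (min (sgnPow p (qF ((1 + α) / 2) - qG ((1 + α) / 2)))
                             (sgnPow p (qF ((1 - α) / 2) - qG ((1 - α) / 2)))) 0)

/-- `Shift₊^{CD}` component, as a lower Lebesgue integral. -/
noncomputable def cdShiftPlusL (qF qG : ℝ → ℝ) : ℝ≥0∞ :=
  (1 / 2 : ℝ≥0∞) * ∫⁻ β in Set.Ioo (0:ℝ) 1, ∫⁻ α in Set.Ioo (0:ℝ) 1,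
    (ENNReal.ofReal (max (min (qF ((1 + α) / 2) - qG ((1 + β) / 2))
                              (qF ((1 - α) / 2) - qG ((1 - β) / 2))) 0) +
     ENNReal.ofReal (max (qF ((1 - α) / 2) - qG ((1 + β) / 2)) 0))

/-- Monotone, left-continuous quantile function on `(0,1)`. -/
def IsQuantile (q : ℝ → ℝ) : Prop :=
  MonotoneOn q (Set.Ioo 0 1) ∧
    ∀ τ ∈ Set.Ioo (0:ℝ) 1,
      Filter.Tendsto q (nhdsWithin τ (Set.Iio τ)) (nhds (q τ))

open Set Filter Topology

theorem sgnPow_pos_iff {p : ℕ} {z : ℝ} : 0 < sgnPow p z ↔ 0 < z := by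
  rcases lt_trichotomy z 0 with h | rfl | h
  · simp only [sgnPow, Real.sign_of_neg h, neg_one_mul, neg_pos, h.not_gt, iff_false, not_lt]
    positivity
  · simp [sgnPow]
  · simpa [sgnPow, Real.sign_of_pos h, h] using pow_pos (abs_pos.2 h.ne') p

theorem measurable_sgnPow (p : ℕ) : Measurable (sgnPow p) := by
  have hsign : Measurable Real.sign :=
    Measurable.ite measurableSet_Iio measurable_const
      (Measurable.ite measurableSet_Ioi measurable_const measurable_const)
  exact hsign.mul (measurable_abs.pow_const p)

theorem one_add_div_two_mem_Ioo {α : ℝ} (h : α ∈ Ioo (0 : ℝ) 1) : (1 + α) / 2 ∈ Ioo (0 : ℝ) 1 :=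
  ⟨by linarith [h.1], by linarith [h.2]⟩

theorem one_sub_div_two_mem_Ioo {α : ℝ} (h : α ∈ Ioo (0 : ℝ) 1) : (1 - α) / 2 ∈ Ioo (0 : ℝ) 1 :=
  ⟨by linarith [h.2], by linarith [h.1]⟩

theorem MonotoneOn.comp_one_add_div_two {q : ℝ → ℝ} (hq : MonotoneOn q (Ioo 0 1)) :
    MonotoneOn (fun α => q ((1 + α) / 2)) (Ioo 0 1) := fun _ ha _ hb hab =>
  hq (one_add_div_two_mem_Ioo ha) (one_add_div_two_mem_Ioo hb) (by linarith)

theorem MonotoneOn.comp_one_sub_div_two {q : ℝ → ℝ} (hq : MonotoneOn q (Ioo 0 1)) :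
    AntitoneOn (fun α => q ((1 - α) / 2)) (Ioo 0 1) := fun _ ha _ hb hab =>
  hq (one_sub_div_two_mem_Ioo hb) (one_sub_div_two_mem_Ioo ha) (by linarith)

def shiftPosSet (qF qG : ℝ → ℝ) : Set ℝ :=
  {α ∈ Ioo 0 1 | 0 < qF ((1 + α) / 2) - qG ((1 + α) / 2) ∧
    0 < qF ((1 - α) / 2) - qG ((1 - α) / 2)}

theorem wdShiftPlusL_pos_iff {qF qG : ℝ → ℝ} (hF : MonotoneOn qF (Ioo 0 1))
    (hG : MonotoneOn qG (Ioo 0 1)) (p : ℕ) :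
    0 < wdShiftPlusL p qF qG ↔ volume (shiftPosSet qF qG) ≠ 0 := by
  have hmeas : AEMeasurable (fun α => ENNReal.ofReal (max (min
      (sgnPow p (qF ((1 + α) / 2) - qG ((1 + α) / 2)))
      (sgnPow p (qF ((1 - α) / 2) - qG ((1 - α) / 2)))) 0)) (volume.restrict (Ioo 0 1)) := by
    have upper := fun {q : ℝ → ℝ} (hq : MonotoneOn q (Ioo 0 1)) =>
      aemeasurable_restrict_of_monotoneOn (μ := volume) measurableSet_Ioo hq.comp_one_add_div_two
    have lower := fun {q : ℝ → ℝ} (hq : MonotoneOn q (Ioo 0 1)) =>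
      aemeasurable_restrict_of_antitoneOn (μ := volume) measurableSet_Ioo hq.comp_one_sub_div_two
    refine ENNReal.measurable_ofReal.comp_aemeasurable (AEMeasurable.max ?_ aemeasurable_const)
    exact ((measurable_sgnPow p).comp_aemeasurable ((upper hF).sub (upper hG))).min
      ((measurable_sgnPow p).comp_aemeasurable ((lower hF).sub (lower hG)))
  rw [pos_iff_ne_zero, wdShiftPlusL, Ne, lintegral_eq_zero_iff' hmeas, EventuallyEq, ae_iff,
    Measure.restrict_apply' measurableSet_Ioo]
  congr! 3
  ext α
  simp only [shiftPosSet, mem_inter_iff, mem_ofPred_eq, Pi.zero_apply, ENNReal.ofReal_eq_zero,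
    not_le, lt_max_iff, lt_irrefl, or_false, lt_min_iff, sgnPow_pos_iff]
  tauto

theorem lintegral_lintegral_pos_of_const_le {X Y : Type*} [MeasurableSpace X] [MeasurableSpace Y]
    {μ : Measure X} {ν : Measure Y} {f : X → Y → ℝ≥0∞} {s S : Set X} {t T : Set Y} {c : ℝ≥0∞}
    (hs : MeasurableSet s) (ht : MeasurableSet t) (hsS : s ⊆ S) (htT : t ⊆ T)
    (hμs : μ s ≠ 0) (hνt : ν t ≠ 0) (hc : c ≠ 0) (hf : ∀ x ∈ s, ∀ y ∈ t, c ≤ f x y) :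
    0 < ∫⁻ x in S, ∫⁻ y in T, f x y ∂ν ∂μ := by
  have inner (x : X) (hx : x ∈ s) : c * ν t ≤ ∫⁻ y in T, f x y ∂ν :=
    calc c * ν t = ∫⁻ _ in t, c ∂ν := (setLIntegral_const _ _).symm
      _ ≤ ∫⁻ y in t, f x y ∂ν := setLIntegral_mono' ht (hf x hx)
      _ ≤ ∫⁻ y in T, f x y ∂ν := lintegral_mono_set htT
  calc 0 < c * ν t * μ s := ENNReal.mul_pos (ENNReal.mul_pos hc hνt).ne' hμs
    _ = ∫⁻ _ in s, c * ν t ∂μ := (setLIntegral_const _ _).symm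
    _ ≤ ∫⁻ x in s, ∫⁻ y in T, f x y ∂ν ∂μ := setLIntegral_mono' hs inner
    _ ≤ ∫⁻ x in S, ∫⁻ y in T, f x y ∂ν ∂μ := lintegral_mono_set hsS

theorem cdShiftPlusL_pos_of_le {qF qG : ℝ → ℝ} {a b a' b' c : ℝ} (hab : a < b) (hab' : a' < b')
    (hsub : Ioo a b ⊆ Ioo 0 1) (hsub' : Ioo a' b' ⊆ Ioo 0 1) (hc : 0 < c)
    (h : ∀ β ∈ Ioo a b, ∀ α ∈ Ioo a' b', c ≤ qF ((1 + α) / 2) - qG ((1 + β) / 2) ∧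
      c ≤ qF ((1 - α) / 2) - qG ((1 - β) / 2)) :
    0 < cdShiftPlusL qF qG := by
  refine ENNReal.mul_pos (by norm_num) (lintegral_lintegral_pos_of_const_le measurableSet_Ioo
    measurableSet_Ioo hsub hsub' ((Measure.measure_Ioo_pos _).2 hab).ne'
    ((Measure.measure_Ioo_pos _).2 hab').ne'
    (ENNReal.ofReal_pos.2 hc).ne' fun β hβ α hα => le_add_right ?_).ne'
  exact ENNReal.ofReal_le_ofReal (le_max_of_le_left (le_min (h β hβ α hα).1 (h β hβ α hα).2))

theorem exists_mem_nhdsWithin_inter_Ioi_neBot {X : Type*} [TopologicalSpace X] [LinearOrder X]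
    [OrderTopology X] [SecondCountableTopology X] [MeasurableSpace X]
    {μ : Measure X} [NullSingletonClass μ] {s : Set X} (hs : μ s ≠ 0) :
    ∃ x ∈ s, (𝓝[s ∩ Ioi x] x).NeBot := by
  by_contra! h
  have hcount : { x ∈ s | 𝓝[s ∩ Ioi x] x = ⊥ }.Countable :=
    countable_setOfPred_isolated_right_within
  refine hs (measure_mono_null ?_ (hcount.measure_zero μ))
  exact fun x hx => ⟨hx, h x hx⟩

theorem IsQuantile.tendsto_comp_one_sub_div_two {q : ℝ → ℝ} (hq : IsQuantile q) {x : ℝ}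
    (hx : x ∈ Ioo 0 1) : Tendsto (fun α => q ((1 - α) / 2)) (𝓝[>] x) (𝓝 (q ((1 - x) / 2))) := by
  have hmap : Tendsto (fun α : ℝ => (1 - α) / 2) (𝓝[>] x) (𝓝[<] ((1 - x) / 2)) :=
    tendsto_nhdsWithin_of_tendsto_nhds_of_eventually_within _
      ((continuous_const.sub continuous_id).div_const 2).continuousWithinAt.tendsto
      (eventually_nhdsWithin_of_forall fun α (hα : x < α) => show (1 - α) / 2 < (1 - x) / 2 by
        linarith)
  exact (hq.2 _ (one_sub_div_two_mem_Ioo hx)).comp hmap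

theorem cdShiftPlusL_pos_of_volume_shiftPosSet_ne_zero {qF qG : ℝ → ℝ} (hF : IsQuantile qF)
    (hG : MonotoneOn qG (Ioo 0 1)) (h : volume (shiftPosSet qF qG) ≠ 0) :
    0 < cdShiftPlusL qF qG := by
  obtain ⟨x, ⟨hx, -, hxlow⟩, hacc⟩ := exists_mem_nhdsWithin_inter_Ioi_neBot h
  set ε := qF ((1 - x) / 2) - qG ((1 - x) / 2)
  have hlow : ∀ᶠ α in 𝓝[>] x, α < 1 ∧ qF ((1 - x) / 2) - ε / 2 < qF ((1 - α) / 2) :=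
    (eventually_nhdsWithin_of_eventually_nhds (eventually_lt_nhds hx.2)).and
      ((hF.tendsto_comp_one_sub_div_two hx).eventually
        (eventually_gt_nhds (sub_lt_self _ (half_pos hxlow))))
  obtain ⟨x', hxx', hx'⟩ := mem_nhdsGT_iff_exists_Ioo_subset.1 hlow
  obtain ⟨y, ⟨⟨hy, hyup, -⟩, hxy⟩, hyx'⟩ :=
    Filter.nonempty_of_mem (inter_mem_nhdsWithin (shiftPosSet qF qG ∩ Ioi x) (Iio_mem_nhds hxx'))
  have hsub : Ioo x x' ⊆ Ioo 0 1 := fun α hα => ⟨hx.1.trans hα.1, (hx' hα).1⟩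
  have hβsub : Ioo x y ⊆ Ioo 0 1 := fun β hβ => ⟨hx.1.trans hβ.1, hβ.2.trans hy.2⟩
  have hαsub : Ioo y x' ⊆ Ioo x x' := Ioo_subset_Ioo_left hxy.le
  refine cdShiftPlusL_pos_of_le hxy hyx' hβsub (hαsub.trans hsub) (lt_min hyup (half_pos hxlow))
    fun β hβ α hα => ?_
  have hβ01 := hβsub hβ
  have hα01 := hsub (hαsub hα)
  have hFup := hF.1.comp_one_add_div_two hy hα01 hα.1.le
  have hGup := hG.comp_one_add_div_two hβ01 hy hβ.2.le
  have hFlow := (hx' (hαsub hα)).2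
  have hGlow := hG.comp_one_sub_div_two hx hβ01 hβ.1.le
  constructor
  · linarith [min_le_left (qF ((1 + y) / 2) - qG ((1 + y) / 2)) (ε / 2)]
  · linarith [min_le_right (qF ((1 + y) / 2) - qG ((1 + y) / 2)) (ε / 2)]

theorem isQuantile_of_monotone_of_continuous {q : ℝ → ℝ} (hm : Monotone q) (hc : Continuous q) :
    IsQuantile q :=
  ⟨hm.monotoneOn _, fun _ _ => hc.continuousWithinAt.tendsto⟩

theorem monotone_min_half : Monotone (min · (1 / 2 : ℝ)) :=
  monotone_id.min monotone_const

theorem wdShiftPlusL_id_min_half (p : ℕ) : wdShiftPlusL p id (min · (1 / 2)) = 0 := by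
  rw [← nonpos_iff_eq_zero, ← not_lt,
    wdShiftPlusL_pos_iff monotoneOn_id (monotone_min_half.monotoneOn _), not_not]
  suffices shiftPosSet id (min · (1 / 2)) = ∅ by rw [this, measure_empty]
  refine eq_empty_of_forall_notMem ?_
  rintro α ⟨hα, -, hlow⟩
  refine hlow.ne' ?_
  simp only [id, min_eq_left (show (1 - α) / 2 ≤ 1 / 2 by linarith [hα.1]), sub_self]

theorem cdShiftPlusL_id_min_half_pos : 0 < cdShiftPlusL id (min · (1 / 2)) := by
  refine cdShiftPlusL_pos_of_le (a := 3 / 4) (b := 1) (a' := 1 / 4) (b' := 1 / 2) (c := 1 / 8)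
    (by norm_num) (by norm_num) (Ioo_subset_Ioo (by norm_num) le_rfl)
    (Ioo_subset_Ioo (by norm_num) (by norm_num)) (by norm_num) fun β hβ α hα => ?_
  show 1 / 8 ≤ (1 + α) / 2 - min ((1 + β) / 2) (1 / 2) ∧
    1 / 8 ≤ (1 - α) / 2 - min ((1 - β) / 2) (1 / 2)
  rw [min_eq_right (show (1 : ℝ) / 2 ≤ (1 + β) / 2 by linarith [hβ.1]),
    min_eq_left (show (1 - β) / 2 ≤ (1 : ℝ) / 2 by linarith [hβ.1])]
  constructor <;> linarith [hα.1, hα.2, hβ.1]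

/-- Positivity of the shift components agrees between `WD_p` and the AVM
(`p = 1`), and positivity for the AVM implies positivity for the Cramér
distance; the converse of this last implication fails in general.  The
minus components are covered by exchanging `F` and `G`. -/
theorem shift_positivity_agreement :
    (∀ qF qG : ℝ → ℝ, IsQuantile qF → IsQuantile qG → ∀ p : ℕ, 1 ≤ p →
      ((0 < wdShiftPlusL p qF qG ↔ 0 < wdShiftPlusL 1 qF qG) ∧
        (0 < wdShiftPlusL 1 qF qG → 0 < cdShiftPlusL qF qG)) ∧
      ((0 < wdShiftPlusL p qG qF ↔ 0 < wdShiftPlusL 1 qG qF) ∧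
        (0 < wdShiftPlusL 1 qG qF → 0 < cdShiftPlusL qG qF))) ∧
    (∃ qF qG : ℝ → ℝ, IsQuantile qF ∧ IsQuantile qG ∧
      0 < cdShiftPlusL qF qG ∧ ¬ 0 < wdShiftPlusL 1 qF qG) := by
  have agreement (qF qG : ℝ → ℝ) (hF : IsQuantile qF) (hG : IsQuantile qG) (p : ℕ) :
      (0 < wdShiftPlusL p qF qG ↔ 0 < wdShiftPlusL 1 qF qG) ∧
        (0 < wdShiftPlusL 1 qF qG → 0 < cdShiftPlusL qF qG) := by
    rw [wdShiftPlusL_pos_iff hF.1 hG.1, wdShiftPlusL_pos_iff hF.1 hG.1]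
    exact ⟨Iff.rfl, cdShiftPlusL_pos_of_volume_shiftPosSet_ne_zero hF hG.1⟩
  refine ⟨fun qF qG hF hG p _ => ⟨agreement qF qG hF hG p, agreement qG qF hG hF p⟩,
    id, (min · (1 / 2)), isQuantile_of_monotone_of_continuous monotone_id continuous_id,
    isQuantile_of_monotone_of_continuous monotone_min_half
      (continuous_id.min continuous_const), cdShiftPlusL_id_min_half_pos,
    not_lt.2 (wdShiftPlusL_id_min_half 1).le⟩
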